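/- arXiv:0809.2402 — 4 statements merged into one kernel-verified Lean document; each statement's English description precedes it below -/
import Mathlib

section
/- Fix r ≥ 3 and μ₁, μ₂ > 1. The function Ω ↦ γ(r, Ωμ₂) - γ(r, Ω/μ₁), where γ(r,t) = (1/Γ(r))∫₀^t s^{r-1}e^{-s} ds is the regularized lower incomplete gamma function, attains its maximum over Ω > 0 uniquely at Ω* = r(log μ₂ + log μ₁)/(μ₂ - 1/μ₁). -/
/-!
Write `γ t = c ∫₀ᵗ s^(r-1) e^(-s) ds` and `H Ω = γ(Ω a) - γ(Ω b)` with `a = μ₂ > b = 1/μ₁ > 0`.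
Then `H' Ω = c Ω^(r-1) (a^r e^(-Ω a) - b^r e^(-Ω b))`, and comparing logarithms of the two terms
shows that `H'` is positive exactly when `Ω (a - b) < r (log a - log b)`. So `H` increases up to
`Ω* = r (log a - log b) / (a - b)` and decreases after it.
-/

open Real Set

theorem lt_of_hasDerivAt_pos_of_neg {f f' : ℝ → ℝ} {a c x : ℝ} (hac : a < c)
    (hf : ∀ y ∈ Ioi a, HasDerivAt f (f' y) y) (hpos : ∀ y ∈ Ioo a c, 0 < f' y)
    (hneg : ∀ y ∈ Ioi c, f' y < 0) (hx : a < x) (hxc : x ≠ c) : f x < f c := by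
  rcases hxc.lt_or_gt with hlt | hgt
  · have hmono : StrictMonoOn f (Icc x c) := by
      refine strictMonoOn_of_deriv_pos (convex_Icc x c)
        (fun y hy ↦ (hf y (hx.trans_le hy.1)).continuousAt.continuousWithinAt) ?_
      intro y hy
      rw [interior_Icc] at hy
      rw [(hf y (hx.trans hy.1)).deriv]
      exact hpos y ⟨hx.trans hy.1, hy.2⟩
    exact hmono (left_mem_Icc.2 hlt.le) (right_mem_Icc.2 hlt.le) hlt
  · have hanti : StrictAntiOn f (Ici c) := by
      refine strictAntiOn_of_deriv_neg (convex_Ici c)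
        (fun y hy ↦ (hf y (hac.trans_le hy)).continuousAt.continuousWithinAt) ?_
      intro y hy
      rw [interior_Ici] at hy
      rw [(hf y (hac.trans hy)).deriv]
      exact hneg y hy
    exact hanti self_mem_Ici hgt.le hgt

theorem hasDerivAt_integral_pow_mul_exp_neg (n : ℕ) (t : ℝ) :
    HasDerivAt (fun t ↦ ∫ s in (0 : ℝ)..t, s ^ n * exp (-s)) (t ^ n * exp (-t)) t := by
  have hcont : Continuous fun s : ℝ ↦ s ^ n * exp (-s) := by fun_prop
  exact intervalIntegral.integral_hasDerivAt_right (hcont.intervalIntegrable 0 t)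
    (hcont.stronglyMeasurableAtFilter _ _) hcont.continuousAt

theorem hasDerivAt_comp_mul_sub_comp_mul {g g' : ℝ → ℝ} (hg : ∀ t, HasDerivAt g (g' t) t)
    (a b x : ℝ) :
    HasDerivAt (fun x ↦ g (x * a) - g (x * b)) (g' (x * a) * a - g' (x * b) * b) x :=
  ((hg _).comp x ((hasDerivAt_id x).mul_const a) |>.congr_deriv (by simp)).sub
    ((hg _).comp x ((hasDerivAt_id x).mul_const b) |>.congr_deriv (by simp))

theorem pow_mul_exp_neg_lt_pow_mul_exp_neg_iff {a b : ℝ} (ha : 0 < a) (hb : 0 < b) (m : ℕ)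
    (x : ℝ) :
    b ^ m * exp (-(x * b)) < a ^ m * exp (-(x * a)) ↔ x * (a - b) < m * (log a - log b) := by
  rw [← log_lt_log_iff (by positivity) (by positivity), log_mul (by positivity) (by positivity),
    log_mul (by positivity) (by positivity), log_pow, log_pow, log_exp, log_exp]
  constructor <;> intro h <;> linarith

theorem comp_mul_sub_comp_mul_lt_of_hasDerivAt {g : ℝ → ℝ} {c : ℝ} (hc : 0 < c) {m : ℕ}
    (hm : 0 < m) (hg : ∀ t, HasDerivAt g (c * (t ^ (m - 1) * exp (-t))) t) {a b : ℝ}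
    (hb : 0 < b) (hba : b < a) {x : ℝ} (hx : 0 < x)
    (hne : x ≠ m * (log a - log b) / (a - b)) :
    g (x * a) - g (x * b) <
      g (m * (log a - log b) / (a - b) * a) - g (m * (log a - log b) / (a - b) * b) := by
  have ha : 0 < a := hb.trans hba
  have hab : 0 < a - b := sub_pos.2 hba
  set xstar := m * (log a - log b) / (a - b)
  have hstar : 0 < xstar :=
    div_pos (mul_pos (by exact_mod_cast hm) (sub_pos.2 (log_lt_log hb hba))) hab
  have hderiv : ∀ y, c * ((y * a) ^ (m - 1) * exp (-(y * a))) * a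
      - c * ((y * b) ^ (m - 1) * exp (-(y * b))) * b
      = c * y ^ (m - 1) * (a ^ m * exp (-(y * a)) - b ^ m * exp (-(y * b))) := by
    intro y
    obtain ⟨k, rfl⟩ := Nat.exists_eq_add_of_lt hm
    simp only [Nat.add_sub_cancel, pow_succ, mul_pow]
    ring
  refine lt_of_hasDerivAt_pos_of_neg hstar
    (fun y _ ↦ hasDerivAt_comp_mul_sub_comp_mul hg a b y) ?_ ?_ hx hne
  · rintro y ⟨hy, hyx⟩
    rw [hderiv]
    refine mul_pos (by positivity) (sub_pos.2 ?_)
    rw [pow_mul_exp_neg_lt_pow_mul_exp_neg_iff ha hb, mul_comm, ← lt_div_iff₀' hab]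
    exact hyx
  · intro y hy
    have hy0 : 0 < y := hstar.trans hy
    rw [hderiv]
    refine mul_neg_of_pos_of_neg (by positivity) (sub_neg.2 ?_)
    rw [pow_mul_exp_neg_lt_pow_mul_exp_neg_iff hb ha, ← neg_lt_neg_iff]
    rw [mem_Ioi, div_lt_iff₀ hab] at hy
    linarith

theorem stmt_5 (r : ℕ) (hr : 3 ≤ r) (μ₁ μ₂ : ℝ) (h1 : 1 < μ₁) (h2 : 1 < μ₂)
    (γ : ℝ → ℝ)
    (hγ : ∀ t : ℝ, γ t = (1 / (Nat.factorial (r - 1) : ℝ)) *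
      ∫ s in (0:ℝ)..t, s ^ (r - 1) * Real.exp (-s))
    (Ωstar : ℝ) (hΩ : Ωstar = r * (Real.log μ₂ + Real.log μ₁) / (μ₂ - 1 / μ₁)) :
    ∀ Ω : ℝ, 0 < Ω → Ω ≠ Ωstar →
      γ (Ω * μ₂) - γ (Ω / μ₁) < γ (Ωstar * μ₂) - γ (Ωstar / μ₁) := by
  intro Ω hΩpos hne
  have hγ' : ∀ t, HasDerivAt γ (1 / (r - 1).factorial * (t ^ (r - 1) * exp (-t))) t := by
    intro t
    rw [funext hγ]
    exact (hasDerivAt_integral_pow_mul_exp_neg (r - 1) t).const_mul _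
  have hb : 0 < μ₁⁻¹ := inv_pos.2 (zero_lt_one.trans h1)
  have hba : μ₁⁻¹ < μ₂ := (inv_lt_one_of_one_lt₀ h1).trans h2
  have hΩ' : Ωstar = r * (log μ₂ - log μ₁⁻¹) / (μ₂ - μ₁⁻¹) := by
    rw [hΩ, log_inv, sub_neg_eq_add, one_div]
  simp only [div_eq_mul_inv Ω, div_eq_mul_inv Ωstar]
  subst hΩ'
  exact comp_mul_sub_comp_mul_lt_of_hasDerivAt (by positivity) (by omega) hγ' hb hba hΩpos hne
end

section
/- For integers r ≥ 3 and n with r ≤ n ≤ (r - √r)/p - 1 where p ∈ (0,1), the inequality n^{r-1} e^{-np} ≥ (n-1)(n-2)⋯(n-r+1)(1-p)^{n-r} holds. -/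
/-!
Dividing by `n ^ (r - 1)`, the claim reads `∏_{i < r} (1 - i / n) * (1 - p) ^ (n - r) ≤ exp (-n p)`.
Since `m ! / (√m (m / e) ^ m)` decreases (Stirling), the product is at most
`√(k / n) (n / k) ^ k exp (k - n)` with `k = n - r + 1`. After taking logarithms, `n p + (k - 1) log (1 - p)`
increases in `p` on the admissible range, so one may take `p = (r - √r) / (n + 1)`. There
`log (n / k) / 2 ≤ √(n / k) - 1` and `log z ≤ sinh (log z)` for `z = n (1 - p) / k` leave an inequality
between rational functions of `k` and `s = √r` which, written in `k - 1 ≥ 0` and `s - 1 ≥ 0` with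
denominators cleared, has only nonnegative coefficients.
-/

open Real
open scoped NNReal

theorem descFactorial_pred_le_stirling {k n : ℕ} (hk : 0 < k) (hkn : k ≤ n) :
    ((n - 1).descFactorial (n - k) : ℝ) ≤
      n ^ (n - k) * (√(k / n) * (n / k) ^ k * rexp (k - n)) := by
  obtain ⟨k, rfl⟩ := Nat.exists_eq_add_one_of_ne_zero hk.ne'
  obtain ⟨j, rfl⟩ := Nat.exists_eq_add_of_le hkn
  have h := Stirling.stirlingSeq'_antitone (Nat.le_add_right k j)
  simp only [Function.comp_apply, Stirling.stirlingSeq, Nat.succ_eq_add_one,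
    sqrt_mul zero_le_two] at h
  rw [div_le_div_iff₀ (by positivity) (by positivity)] at h
  have hD := Nat.factorial_mul_descFactorial (Nat.le_add_left j k)
  rw [Nat.add_sub_cancel] at hD
  simp only [show k + 1 + j - 1 = k + j by omega, show k + 1 + j - (k + 1) = j by omega]
  rw [Nat.factorial_succ, Nat.factorial_succ, ← hD] at h
  push_cast at h ⊢
  rw [show (k : ℝ) + 1 - (k + 1 + j) = -(j * 1) by ring, exp_neg, exp_nat_mul,
    sqrt_div (by positivity)]
  rw [div_pow, div_pow] at h
  rw [div_pow]
  field_simp at h ⊢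
  rw [show (k : ℝ) + 1 + j = k + j + 1 by ring]
  have hK := mul_self_sqrt (by positivity : (0 : ℝ) ≤ k + 1)
  have hN := mul_self_sqrt (by positivity : (0 : ℝ) ≤ k + j + 1)
  rw [← mul_le_mul_iff_of_pos_left
    (by positivity : 0 < √(k + j + 1 : ℝ) * √(k + 1 : ℝ) * rexp 1 ^ (k + 1))]
  linear_combination h
    + ((k + j).descFactorial j * √(k + 1 : ℝ) * (k + 1 : ℝ) ^ (k + 1) * rexp 1 ^ (k + j + 1)) * hN
    - (rexp 1 ^ (k + 1) * √(k + j + 1 : ℝ) * (k + j + 1 : ℝ) ^ (k + j + 1)) * hK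

theorem mul_log_one_sub_add_mul_le {c n p q : ℝ} (hc : 0 ≤ c) (hpq : p ≤ q) (hq : q < 1)
    (hcq : c ≤ n * (1 - q)) : c * log (1 - p) + n * p ≤ c * log (1 - q) + n * q := by
  have hq' : 0 < 1 - q := by linarith
  have hlog : log (1 - p) - log (1 - q) ≤ (q - p) / (1 - q) := by
    rw [← log_div (by linarith) hq'.ne']
    calc log ((1 - p) / (1 - q)) ≤ (1 - p) / (1 - q) - 1 :=
          log_le_sub_one_of_pos (div_pos (by linarith) hq')
      _ = (q - p) / (1 - q) := by field_simp; ring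
  calc c * log (1 - p) + n * p = c * log (1 - q) + c * (log (1 - p) - log (1 - q)) + n * p := by
        ring
    _ ≤ c * log (1 - q) + c / (1 - q) * (q - p) + n * p := by
        rw [div_mul_comm, mul_comm _ c]; gcongr
    _ ≤ c * log (1 - q) + n * (q - p) + n * p := by
        gcongr
        rwa [div_le_iff₀ hq']
    _ = c * log (1 - q) + n * q := by ring

theorem algebraic_bound_at_threshold {k s n z : ℝ} (hk : 1 ≤ k) (hs : 1 ≤ s)
    (hn : n = k + s ^ 2 - 1) (hz : z = n * (k + s) / (k * (n + 1))) :
    √(n / k) + n * ((s ^ 2 - s) / (n + 1)) + (k - 1) * ((z - z⁻¹) / 2) ≤ s ^ 2 := by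
  suffices √(n / k) ≤ s ^ 2 - n * (s ^ 2 - s) / (n + 1) - (k - 1) * ((z - z⁻¹) / 2) by
    rw [← mul_div_assoc]; linarith
  rw [sqrt_le_iff]
  lift k - 1 to ℝ≥0 using (by linarith) with m hm
  lift s - 1 to ℝ≥0 using (by linarith) with u hu
  obtain rfl : k = m + 1 := by linarith
  obtain rfl : s = u + 1 := by linarith
  obtain rfl : n = m + (u + 1) ^ 2 := by linarith
  subst hz
  constructor <;>
  · rw [← sub_nonneg]
    field_simp
    ring_nf
    positivity

theorem log_bound_at_threshold {k s n : ℝ} (hk : 1 ≤ k) (hs : 1 ≤ s) (hn : n = k + s ^ 2 - 1) :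
    (k - 1 / 2) * log (n / k) + (k - 1) * log (1 - (s ^ 2 - s) / (n + 1))
      + n * ((s ^ 2 - s) / (n + 1)) ≤ s ^ 2 - 1 := by
  set z := n * (k + s) / (k * (n + 1)) with hz
  have hn0 : 0 < n := by nlinarith
  have hnk : 0 < n / k := by positivity
  have hlog : log (1 - (s ^ 2 - s) / (n + 1)) = log z - log (n / k) := by
    have : 1 - (s ^ 2 - s) / (n + 1) = z / (n / k) := by
      rw [hz]; field_simp; linarith
    rw [this, log_div (by positivity) hnk.ne']
  have hsqrt : log (n / k) / 2 ≤ √(n / k) - 1 := by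
    rw [← log_sqrt hnk.le]
    exact log_le_sub_one_of_pos (sqrt_pos.2 hnk)
  have hsinh : log z ≤ (z - z⁻¹) / 2 := by
    rw [← sinh_log (by positivity)]
    refine self_le_sinh_iff.2 (log_nonneg ?_)
    rw [hz, one_le_div (by positivity)]
    nlinarith
  rw [hlog]
  linear_combination hsqrt + mul_le_mul_of_nonneg_left hsinh (by linarith : 0 ≤ k - 1)
    + algebraic_bound_at_threshold hk hs hn hz

theorem stirling_factor_mul_pow_le {k : ℕ} {s n p : ℝ} (hk : 1 ≤ k) (hs : 0 ≤ s)
    (hn : n = k + s ^ 2 - 1) (hp : 0 < p) (hpn : p * (n + 1) ≤ s ^ 2 - s) :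
    √(k / n) * (n / k) ^ k * rexp (k - n) * (1 - p) ^ (k - 1) ≤ rexp (-(n * p)) := by
  have hk' : (1 : ℝ) ≤ k := by exact_mod_cast hk
  have hs1 : 1 ≤ s := by nlinarith
  have hn1 : 0 < n + 1 := by nlinarith
  have hn0 : 0 < n := by nlinarith
  set P := (s ^ 2 - s) / (n + 1) with hP
  have hpP : p ≤ P := by rwa [hP, le_div_iff₀ hn1]
  have hP1 : P < 1 := by rw [hP, div_lt_one hn1]; nlinarith
  have hmono := mul_log_one_sub_add_mul_le (n := n) (by linarith : (0 : ℝ) ≤ k - 1) hpP hP1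
    (by rw [hP]; field_simp; nlinarith)
  have hcore := log_bound_at_threshold hk' hs1 hn
  have hp1 : 0 < 1 - p := by linarith
  have hnk : 0 < n / k := by positivity
  rw [← inv_div n (k : ℝ), ← log_le_iff_le_exp (mul_pos (by positivity) (pow_pos hp1 _)),
    log_mul (by positivity) (pow_pos hp1 _).ne', log_mul (by positivity) (by positivity),
    log_mul (by positivity) (by positivity), log_sqrt (by positivity), log_pow, log_pow, log_exp,
    log_inv, Nat.cast_sub hk]
  push_cast
  linarith

theorem stmt_10_general (r n : ℕ) (p : ℝ) (hp : p ∈ Set.Ioo (0:ℝ) 1)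
    (hn : r ≤ n) (hn' : (n : ℝ) ≤ ((r : ℝ) - Real.sqrt r) / p - 1) :
    (n : ℝ) ^ (r - 1) * Real.exp (-(n * p)) ≥
      (Nat.descFactorial (n - 1) (r - 1) : ℝ) * (1 - p) ^ (n - r) := by
  have hr : 1 ≤ r := by
    by_contra! hr
    simp only [Nat.lt_one_iff.1 hr, Nat.cast_zero, sqrt_zero, sub_zero, zero_div] at hn'
    linarith [n.cast_nonneg (α := ℝ)]
  have hpn : p * (n + 1) ≤ √r ^ 2 - √r := by
    rw [sq_sqrt r.cast_nonneg, ← le_div_iff₀' hp.1]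
    linarith
  obtain ⟨k, hk⟩ : ∃ k, k = n - r + 1 := ⟨_, rfl⟩
  have hnk : (n : ℝ) = k + √r ^ 2 - 1 := by
    rw [sq_sqrt r.cast_nonneg, hk, Nat.cast_add, Nat.cast_sub hn]; push_cast; ring
  have h1p : (0 : ℝ) ≤ (1 - p) ^ (k - 1) := pow_nonneg (by linarith [hp.2]) _
  rw [ge_iff_le, show r - 1 = n - k by omega, show n - r = k - 1 by omega]
  calc ((n - 1).descFactorial (n - k) : ℝ) * (1 - p) ^ (k - 1)
      ≤ n ^ (n - k) * (√(k / n) * (n / k) ^ k * rexp (k - n)) * (1 - p) ^ (k - 1) := by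
        gcongr
        exact descFactorial_pred_le_stirling (by omega) (by omega)
    _ = n ^ (n - k) * (√(k / n) * (n / k) ^ k * rexp (k - n) * (1 - p) ^ (k - 1)) := by ring
    _ ≤ n ^ (n - k) * rexp (-(n * p)) := by
        gcongr
        exact stirling_factor_mul_pow_le (by omega) (sqrt_nonneg _) hnk hp.1 hpn

theorem stmt_10 (r n : ℕ) (hr : 3 ≤ r) (p : ℝ) (hp : p ∈ Set.Ioo (0:ℝ) 1)
    (hn : r ≤ n) (hn' : (n : ℝ) ≤ ((r : ℝ) - Real.sqrt r) / p - 1) :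
    (n : ℝ) ^ (r - 1) * Real.exp (-(n * p)) ≥
      (Nat.descFactorial (n - 1) (r - 1) : ℝ) * (1 - p) ^ (n - r) :=
  stmt_10_general r n p hp hn hn'
end

section
/- The equation log((t + √t + 1)/(t - √t)) - (2√t + 1)/t = 0 has exactly one solution t in (1, ∞), and that solution lies in the open interval (4, 5). -/
/-!
Substituting `s = √t` turns the left-hand side into
`g s = log (s² + s + 1) - log (s² - s) - (2s + 1) / s²`, whose derivative on `(1, ∞)` has the
sign of `(s - 1)² - 3`. So `g` decreases on `(1, 1 + √3]` and increases on `[1 + √3, ∞)` towards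
its limit `0`; hence it is negative on `[1 + √3, ∞)` and has at most one zero in `(1, ∞)`. The
signs `g 2 > 0 > g (11/5)` place that zero in `(2, 11/5)`, i.e. `t ∈ (4, 121/25) ⊆ (4, 5)`.
-/

open Real Filter Set Topology

theorem StrictMonoOn.lt_of_tendsto_atTop {α β : Type*} [LinearOrder α] [NoMaxOrder α]
    [TopologicalSpace β] [LinearOrder β] [OrderClosedTopology β] {f : α → β} {a x : α} {l : β}
    (hf : StrictMonoOn f (Ici a)) (hl : Tendsto f atTop (𝓝 l)) (hx : a ≤ x) : f x < l := by
  have : Nonempty α := ⟨x⟩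
  obtain ⟨y, hxy⟩ := exists_gt x
  refine (hf hx (hx.trans hxy.le) hxy).trans_le (ge_of_tendsto hl ?_)
  filter_upwards [eventually_ge_atTop y] with z hz
  exact hf.monotoneOn (hx.trans hxy.le) (hx.trans (hxy.le.trans hz)) hz

namespace LogRatio

noncomputable def f (t : ℝ) : ℝ :=
  log ((t + √t + 1) / (t - √t)) - (2 * √t + 1) / t

noncomputable def g (s : ℝ) : ℝ :=
  log (s ^ 2 + s + 1) - log (s ^ 2 - s) - (2 * s + 1) / s ^ 2

theorem f_eq_g_sqrt {t : ℝ} (ht : 1 < t) : f t = g √t := by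
  rw [g, sq_sqrt (by linarith), ← log_div (by positivity)
    (sub_ne_zero.2 (sqrt_lt_self_iff.2 ht).ne'), f]

theorem hasDerivAt_g {s : ℝ} (h0 : s ≠ 0) (h1 : s ≠ 1) :
    HasDerivAt g (((s - 1) ^ 2 - 3) / (s ^ 3 * (s - 1) * (s ^ 2 + s + 1))) s := by
  have hA : s ^ 2 + s + 1 ≠ 0 := by nlinarith [sq_nonneg (2 * s + 1)]
  have hB : s ^ 2 - s ≠ 0 := by
    rw [show s ^ 2 - s = s * (s - 1) by ring]; exact mul_ne_zero h0 (sub_ne_zero.2 h1)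
  have hsq : HasDerivAt (fun x : ℝ => x ^ 2) (2 * s) s := by simpa using hasDerivAt_pow 2 s
  have hlogA := ((hsq.add (hasDerivAt_id s)).add_const 1).log hA
  have hlogB := (hsq.sub (hasDerivAt_id s)).log hB
  have hfrac := (((hasDerivAt_id s).const_mul 2).add_const 1).div hsq (pow_ne_zero 2 h0)
  refine ((hlogA.sub hlogB).sub hfrac).congr_deriv ?_
  have h1' : s - 1 ≠ 0 := sub_ne_zero.2 h1
  simp only [Pi.add_apply, Pi.sub_apply, id]
  rw [div_sub_div _ _ hA hB, div_sub_div _ _ (mul_ne_zero hA hB) (by positivity),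
    div_eq_div_iff (by positivity) (by simp [*])]
  ring

theorem continuousAt_g {s : ℝ} (hs : 1 < s) : ContinuousAt g s :=
  (hasDerivAt_g (by positivity) hs.ne').continuousAt

theorem strictAntiOn_g : StrictAntiOn g (Ioc 1 (1 + √3)) := by
  refine strictAntiOn_of_deriv_neg (convex_Ioc _ _)
    (fun s hs => (continuousAt_g hs.1).continuousWithinAt) fun s hs => ?_
  rw [interior_Ioc] at hs
  obtain ⟨hs1, hs3⟩ := hs
  rw [(hasDerivAt_g (by positivity) hs1.ne').deriv]
  have : (s - 1) ^ 2 < 3 := (lt_sqrt (by linarith)).1 (by linarith)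
  exact div_neg_of_neg_of_pos (by linarith) (by have := sub_pos.2 hs1; positivity)

theorem strictMonoOn_g : StrictMonoOn g (Ici (1 + √3)) := by
  have h3 : 1 < 1 + √3 := by simp
  refine strictMonoOn_of_deriv_pos (convex_Ici _)
    (fun s hs => (continuousAt_g (h3.trans_le hs)).continuousWithinAt) fun s hs => ?_
  rw [interior_Ici] at hs
  have hs1 : 1 < s := h3.trans hs
  rw [(hasDerivAt_g (by positivity) hs1.ne').deriv]
  have : 3 < (s - 1) ^ 2 := (sqrt_lt' (by linarith)).1 (by linarith [hs.out])
  exact div_pos (by linarith) (by have := sub_pos.2 hs1; positivity)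

theorem tendsto_g_atTop : Tendsto g atTop (𝓝 0) := by
  -- `g s = h s⁻¹`, and `h` is continuous at `0` with `h 0 = 0`
  let h : ℝ → ℝ := fun u => log ((1 + u + u ^ 2) / (1 - u)) - (2 * u + u ^ 2)
  have hcont : ContinuousAt h 0 := by fun_prop (disch := norm_num)
  rw [show (0:ℝ) = h 0 by simp [h]]
  refine (hcont.tendsto.comp tendsto_inv_atTop_zero).congr' ?_
  filter_upwards [eventually_gt_atTop 1] with s hs
  have : s - 1 ≠ 0 := by linarith
  have : s ≠ 0 := by positivity
  simp only [h, Function.comp_apply, g]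
  rw [← log_div (by positivity) (by nlinarith)]
  field_simp

theorem g_two_pos : 0 < g 2 := by
  have hexp : exp 5 < (7 / 2) ^ 4 :=
    calc exp 5 = exp 1 ^ 5 := by rw [← exp_nat_mul]; norm_num
      _ < 2.7182818286 ^ 5 := by gcongr; exact exp_one_lt_d9
      _ < (7 / 2) ^ 4 := by norm_num
  have hlog : 5 < log ((7 / 2) ^ 4) := (lt_log_iff_exp_lt (by norm_num)).2 hexp
  rw [log_pow, Nat.cast_ofNat] at hlog
  have hg : g 2 = log (7 / 2) - 5 / 4 := by
    rw [g, ← log_div (by norm_num) (by norm_num)]; norm_num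
  linarith

theorem g_eleven_fifths_neg : g (11 / 5) < 0 := by
  have hexp : (67 / 22) ^ 121 < exp 135 :=
    calc (67 / 22 : ℝ) ^ 121 < 2.7182818283 ^ 135 := by norm_num
      _ < exp 1 ^ 135 := by gcongr; exact exp_one_gt_d9
      _ = exp 135 := by rw [← exp_nat_mul]; norm_num
  have hlog : log ((67 / 22) ^ 121) < 135 := (log_lt_iff_lt_exp (by norm_num)).2 hexp
  rw [log_pow, Nat.cast_ofNat] at hlog
  have hg : g (11 / 5) = log (67 / 22) - 135 / 121 := by
    rw [g, ← log_div (by norm_num) (by norm_num)]; norm_num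
  linarith

theorem eleven_fifths_le_one_add_sqrt_three : 11 / 5 ≤ 1 + √3 := by
  have : (6 / 5 : ℝ) ≤ √3 := le_sqrt_of_sq_le (by norm_num)
  linarith

theorem injOn_g : InjOn g (Ioo 2 (11 / 5)) :=
  strictAntiOn_g.injOn.mono <|
    Ioo_subset_Ioc_self.trans (Ioc_subset_Ioc one_le_two eleven_fifths_le_one_add_sqrt_three)

theorem mem_Ioo_of_g_eq_zero {s : ℝ} (hs : 1 < s) (hg : g s = 0) : s ∈ Ioo 2 (11 / 5) := by
  have h3 := eleven_fifths_le_one_add_sqrt_three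
  have hs3 : s ≤ 1 + √3 := by
    by_contra! h
    exact (StrictMonoOn.lt_of_tendsto_atTop strictMonoOn_g tendsto_g_atTop h.le).ne hg
  have hmem : s ∈ Ioc 1 (1 + √3) := ⟨hs, hs3⟩
  constructor
  · by_contra! h
    have := strictAntiOn_g.antitoneOn hmem ⟨one_lt_two, by linarith⟩ h
    linarith [g_two_pos]
  · by_contra! h
    have := strictAntiOn_g.antitoneOn ⟨by norm_num, h3⟩ hmem h
    linarith [g_eleven_fifths_neg]

theorem exists_g_eq_zero : ∃ s ∈ Ioo 2 (11 / 5), g s = 0 :=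
  intermediate_value_Ioo' (by norm_num)
    (fun s hs => (continuousAt_g (by linarith [hs.1])).continuousWithinAt)
    ⟨g_eleven_fifths_neg, g_two_pos⟩

end LogRatio

open LogRatio in
theorem stmt_13 :
    (∃! t : ℝ, 1 < t ∧
      Real.log ((t + Real.sqrt t + 1) / (t - Real.sqrt t)) - (2 * Real.sqrt t + 1) / t = 0) ∧
    (∀ t : ℝ, 1 < t →
      Real.log ((t + Real.sqrt t + 1) / (t - Real.sqrt t)) - (2 * Real.sqrt t + 1) / t = 0 →
      4 < t ∧ t < 5) := by
  change (∃! t, 1 < t ∧ f t = 0) ∧ ∀ t, 1 < t → f t = 0 → 4 < t ∧ t < 5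
  have sqrt_mem : ∀ t, 1 < t → f t = 0 → √t ∈ Ioo 2 (11 / 5) := fun t ht hf =>
    mem_Ioo_of_g_eq_zero (lt_sqrt_of_sq_lt (by rwa [one_pow])) (f_eq_g_sqrt ht ▸ hf)
  obtain ⟨s, hs, hgs⟩ := exists_g_eq_zero
  have hs1 : 1 < s ^ 2 := by nlinarith [hs.1]
  have hfs : f (s ^ 2) = 0 := by rw [f_eq_g_sqrt hs1, sqrt_sq (by linarith [hs.1]), hgs]
  refine ⟨⟨s ^ 2, ⟨hs1, hfs⟩, fun t ⟨ht, hft⟩ => ?_⟩, fun t ht hft => ?_⟩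
  · have hts : √t = s := injOn_g (sqrt_mem t ht hft) hs (by rw [← f_eq_g_sqrt ht, hft, hgs])
    rw [← hts, sq_sqrt (by linarith)]
  · obtain ⟨h2, h11⟩ := sqrt_mem t ht hft
    have h4 := (lt_sqrt zero_le_two).1 h2
    have h5 := lt_sq_of_sqrt_lt h11
    constructor <;> norm_num at h4 h5 ⊢ <;> linarith
end

section
/- Fix an integer r ≥ 1. The regularized incomplete beta function I_p(r, w) = (1/B(r,w)) ∫₀^p t^{r-1}(1-t)^{w-1} dt, for fixed p ∈ (0,1), is a strictly increasing function of the real parameter w > 0. -/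
/-!
Split the beta integral at `p` into `A w = ∫₀^p t^(r-1) (1-t)^(w-1)` and `B w = ∫ₚ^1` of the
same integrand, so that `I_p(r, w) = A w / (A w + B w)` by the beta–gamma identity. For
`w₁ < w₂` the integrand of `w₂` is that of `w₁` times `(1-t)^(w₂-w₁)`, which exceeds
`c = (1-p)^(w₂-w₁)` on `(0, p)` and is smaller than `c` on `(p, 1)`; hence `c A w₁ < A w₂`
and `B w₂ < c B w₁`, which together say that the ratio `A / (A + B)` increases.
-/

open MeasureTheory intervalIntegral Set

theorem div_add_lt_div_add {a₁ b₁ a₂ b₂ c : ℝ} (ha₁ : 0 < a₁) (hb₁ : 0 < b₁)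
    (hb₂ : 0 < b₂) (ha : c * a₁ < a₂) (hb : b₂ < c * b₁) :
    a₁ / (a₁ + b₁) < a₂ / (a₂ + b₂) := by
  have hc : 0 < c := pos_of_mul_pos_left (hb₂.trans hb) hb₁.le
  have ha₂ : 0 < a₂ := (mul_pos hc ha₁).trans ha
  rw [div_lt_div_iff₀ (by positivity) (by positivity)]
  nlinarith [mul_lt_mul_of_pos_left ha hb₁, mul_lt_mul_of_pos_left hb ha₁]

theorem integral_lt_integral_of_lt_on_Ioo {f g : ℝ → ℝ} {a b : ℝ} (hab : a < b)
    (hf : IntervalIntegrable f volume a b) (hg : IntervalIntegrable g volume a b)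
    (h : ∀ x ∈ Ioo a b, f x < g x) : ∫ x in a..b, f x < ∫ x in a..b, g x := by
  rw [← sub_pos, ← integral_sub hg hf]
  exact intervalIntegral_pos_of_pos_on (hg.sub hf) (fun x hx => sub_pos.2 (h x hx)) hab

/-- The integrand of `B(r, w)` with `r = n + 1`. -/
noncomputable def betaKernel (n : ℕ) (w t : ℝ) : ℝ := t ^ n * (1 - t) ^ (w - 1)

section betaKernel

variable {n : ℕ} {w : ℝ}

theorem betaKernel_pos {t : ℝ} (ht : t ∈ Ioo (0 : ℝ) 1) : 0 < betaKernel n w t := by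
  have h₀ : 0 < t := ht.1
  have h₁ : 0 < 1 - t := sub_pos.2 ht.2
  unfold betaKernel
  positivity

theorem betaKernel_eq_mul_rpow (w' : ℝ) {t : ℝ} (ht : t < 1) :
    betaKernel n w' t = betaKernel n w t * (1 - t) ^ (w' - w) := by
  rw [betaKernel, betaKernel, mul_assoc, ← Real.rpow_add (sub_pos.2 ht)]
  ring_nf

theorem intervalIntegrable_betaKernel (hw : 0 < w) {a b : ℝ} (ha : a ∈ Icc (0 : ℝ) 1)
    (hb : b ∈ Icc (0 : ℝ) 1) :
    IntervalIntegrable (betaKernel n w) volume a b := by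
  have hint : IntervalIntegrable (fun t : ℝ => (1 - t) ^ (w - 1)) volume 0 1 := by
    simpa using ((intervalIntegrable_rpow' (a := 0) (b := 1) (r := w - 1)
      (by linarith)).comp_sub_left 1).symm
  refine (hint.continuousOn_mul (g := fun t => t ^ n) (by fun_prop)).mono_set ?_
  rw [uIcc_of_le zero_le_one]
  exact uIcc_subset_Icc ha hb

theorem integral_betaKernel_pos (hw : 0 < w) {a b : ℝ} (ha : 0 ≤ a) (hab : a < b)
    (hb : b ≤ 1) :
    0 < ∫ t in a..b, betaKernel n w t :=
  intervalIntegral_pos_of_pos_on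
    (intervalIntegrable_betaKernel hw ⟨ha, hab.le.trans hb⟩ ⟨ha.trans hab.le, hb⟩)
    (fun _ ht => betaKernel_pos ⟨ha.trans_lt ht.1, ht.2.trans_le hb⟩) hab

theorem Gamma_mul_Gamma_eq_Gamma_mul_integral_betaKernel (hw : 0 < w) :
    Real.Gamma (n + 1) * Real.Gamma w
      = Real.Gamma (n + 1 + w) * ∫ t in (0 : ℝ)..1, betaKernel n w t := by
  have hc := Complex.Gamma_mul_Gamma_eq_betaIntegral (s := (n + 1 : ℝ)) (t := w)
    (by simp; positivity) (by simpa using hw)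
  have hint : Complex.betaIntegral (n + 1 : ℝ) w
      = ((∫ t in (0 : ℝ)..1, betaKernel n w t : ℝ) : ℂ) := by
    rw [Complex.betaIntegral, ← integral_ofReal]
    refine integral_congr fun t ht => ?_
    rw [uIcc_of_le zero_le_one] at ht
    have h1t : 0 ≤ 1 - t := sub_nonneg.2 ht.2
    rw [betaKernel, Complex.ofReal_mul, Complex.ofReal_pow, Complex.ofReal_cpow h1t]
    push_cast
    rw [add_sub_cancel_right, Complex.cpow_natCast]
  rw [hint, ← Complex.ofReal_add, Complex.Gamma_ofReal, Complex.Gamma_ofReal,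
    Complex.Gamma_ofReal] at hc
  exact_mod_cast hc

theorem Gamma_div_mul_integral_betaKernel (hw : 0 < w) {p : ℝ} (hp : p ∈ Icc (0 : ℝ) 1) :
    Real.Gamma (n + 1 + w) / (Real.Gamma (n + 1) * Real.Gamma w) *
        ∫ t in (0 : ℝ)..p, betaKernel n w t
      = (∫ t in (0 : ℝ)..p, betaKernel n w t) /
          ((∫ t in (0 : ℝ)..p, betaKernel n w t) + ∫ t in p..1, betaKernel n w t) := by
  have hG : Real.Gamma (n + 1 + w) ≠ 0 := (Real.Gamma_pos_of_pos (by positivity)).ne'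
  rw [integral_add_adjacent_intervals (intervalIntegrable_betaKernel hw unitInterval.zero_mem hp)
    (intervalIntegrable_betaKernel hw hp unitInterval.one_mem),
    Gamma_mul_Gamma_eq_Gamma_mul_integral_betaKernel hw, div_mul_eq_mul_div,
    mul_div_mul_left _ _ hG]

variable {w₁ w₂ p : ℝ}

theorem rpow_mul_integral_betaKernel_lt (hw₁ : 0 < w₁) (hw : w₁ < w₂)
    (hp : p ∈ Ioo (0 : ℝ) 1) :
    (1 - p) ^ (w₂ - w₁) * ∫ t in (0 : ℝ)..p, betaKernel n w₁ t
      < ∫ t in (0 : ℝ)..p, betaKernel n w₂ t := by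
  have hp' : p ∈ Icc (0 : ℝ) 1 := Ioo_subset_Icc_self hp
  rw [← intervalIntegral.integral_const_mul]
  refine integral_lt_integral_of_lt_on_Ioo hp.1
    ((intervalIntegrable_betaKernel hw₁ unitInterval.zero_mem hp').const_mul _)
    (intervalIntegrable_betaKernel (hw₁.trans hw) unitInterval.zero_mem hp') fun t ht => ?_
  have ht₁ : t < 1 := ht.2.trans hp.2
  rw [betaKernel_eq_mul_rpow w₂ ht₁, mul_comm]
  exact mul_lt_mul_of_pos_left
    (Real.rpow_lt_rpow (sub_nonneg.2 hp.2.le) (by linarith [ht.2]) (sub_pos.2 hw))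
    (betaKernel_pos ⟨ht.1, ht₁⟩)

theorem integral_betaKernel_lt_rpow_mul (hw₁ : 0 < w₁) (hw : w₁ < w₂)
    (hp : p ∈ Ioo (0 : ℝ) 1) :
    ∫ t in p..1, betaKernel n w₂ t
      < (1 - p) ^ (w₂ - w₁) * ∫ t in p..1, betaKernel n w₁ t := by
  have hp' : p ∈ Icc (0 : ℝ) 1 := Ioo_subset_Icc_self hp
  rw [← intervalIntegral.integral_const_mul]
  refine integral_lt_integral_of_lt_on_Ioo hp.2
    (intervalIntegrable_betaKernel (hw₁.trans hw) hp' unitInterval.one_mem)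
    ((intervalIntegrable_betaKernel hw₁ hp' unitInterval.one_mem).const_mul _) fun t ht => ?_
  rw [betaKernel_eq_mul_rpow w₂ ht.2, mul_comm]
  exact mul_lt_mul_of_pos_right
    (Real.rpow_lt_rpow (sub_nonneg.2 ht.2.le) (by linarith [ht.1]) (sub_pos.2 hw))
    (betaKernel_pos ⟨hp.1.trans ht.1, ht.2⟩)

end betaKernel

theorem stmt_19 (r : ℕ) (hr : 1 ≤ r) (p : ℝ) (hp : p ∈ Set.Ioo (0:ℝ) 1) :
    StrictMonoOn
      (fun w : ℝ =>
        (Real.Gamma ((r : ℝ) + w) / (Real.Gamma (r : ℝ) * Real.Gamma w)) *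
          ∫ t in (0:ℝ)..p, t ^ (r - 1) * (1 - t) ^ (w - 1))
      (Set.Ioi (0:ℝ)) := by
  obtain ⟨n, rfl⟩ := Nat.exists_eq_add_of_le' hr
  intro w₁ (hw₁ : 0 < w₁) w₂ (hw₂ : 0 < w₂) hw
  have hp' : p ∈ Icc (0 : ℝ) 1 := Ioo_subset_Icc_self hp
  change _ * ∫ t in (0 : ℝ)..p, betaKernel n w₁ t
    < _ * ∫ t in (0 : ℝ)..p, betaKernel n w₂ t
  rw [Nat.cast_add_one, Gamma_div_mul_integral_betaKernel hw₁ hp',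
    Gamma_div_mul_integral_betaKernel hw₂ hp']
  exact div_add_lt_div_add (integral_betaKernel_pos hw₁ le_rfl hp.1 hp.2.le)
    (integral_betaKernel_pos hw₁ hp.1.le hp.2 le_rfl)
    (integral_betaKernel_pos hw₂ hp.1.le hp.2 le_rfl)
    (rpow_mul_integral_betaKernel_lt hw₁ hw hp) (integral_betaKernel_lt_rpow_mul hw₁ hw hp)
end
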